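/- For any finite connected simple graph G not isomorphic to K2, there exists a natural number n such that the n-fold iterate (ρ∘λ)^n(G) is a connected graph having no leaves and no pair of distinct sibling vertices; in particular, the reduction of G is well defined and is a connected graph without leaves and without siblings. -/

import Mathlib

open SimpleGraph

universe u

/-- The closed neighborhood of a vertex. -/
def closedNbhd {V : Type u} (G : SimpleGraph V) (v : V) : Set V :=
  insert v (G.neighborSet v)

/-- Two vertices are siblings if they share the same closed neighborhood. -/
def Sibling {V : Type u} (G : SimpleGraph V) (u v : V) : Prop :=
  closedNbhd G u = closedNbhd G v

/-- A leaf is a vertex of degree one. -/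
def IsLeaf {V : Type u} (G : SimpleGraph V) (v : V) : Prop :=
  Nat.card (G.neighborSet v) = 1

/-- The tuft number: the maximal number of leaves adjacent to a single vertex. -/
noncomputable def tuftNumber {V : Type u} (G : SimpleGraph V) : ℕ :=
  ⨆ v : V, Nat.card {u | IsLeaf G u ∧ G.Adj v u}

/-- The sibling number: the maximum over vertices `v` of the number of vertices sharing
the closed neighborhood of `v`, minus one. -/
noncomputable def siblingNumber {V : Type u} (G : SimpleGraph V) : ℕ :=
  ⨆ v : V, (Nat.card {u | Sibling G u v} - 1)

/-- The complete graph on two vertices. -/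
def K2 : SimpleGraph (Fin 2) := ⊤

/-- The sibling relation as a setoid. -/
def siblingSetoid {V : Type u} (G : SimpleGraph V) : Setoid V :=
  ⟨Sibling G, ⟨fun _ => rfl, fun {_ _} h => Eq.symm h, fun {_ _ _} h h' => Eq.trans h h'⟩⟩

/-- `rho G` is the quotient of `G` by the sibling relation: vertices are sibling
equivalence classes, two distinct classes being adjacent iff some pair of
representatives is adjacent. -/
def rho {V : Type u} (G : SimpleGraph V) : SimpleGraph (Quotient (siblingSetoid G)) where
  Adj A B := A ≠ B ∧ ∃ u v : V, Quotient.mk (siblingSetoid G) u = A ∧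
      Quotient.mk (siblingSetoid G) v = B ∧ G.Adj u v
  symm := ⟨by
    rintro A B ⟨hne, u, v, hu, hv, h⟩
    exact ⟨hne.symm, v, u, hv, hu, h.symm⟩⟩
  loopless := ⟨by
    rintro A ⟨hne, -⟩
    exact hne rfl⟩

/-- `lamS G S` is the induced subgraph on the complement of `S`. -/
def lamS {V : Type u} (G : SimpleGraph V) (S : Set V) : SimpleGraph ↥(Sᶜ) :=
  SimpleGraph.induce Sᶜ G

/-- `lam G` is the induced subgraph on the set of non-leaf vertices. -/
def lam {V : Type u} (G : SimpleGraph V) : SimpleGraph ↥{v : V | ¬ IsLeaf G v} :=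
  SimpleGraph.induce {v : V | ¬ IsLeaf G v} G

/-- A finite graph, bundled with its vertex type. -/
structure FinGraph : Type (u + 1) where
  V : Type u
  [finite : Finite V]
  G : SimpleGraph V

attribute [instance] FinGraph.finite

/-- One reduction step: remove all leaves, then contract each sibling class to a point. -/
def redStep (X : FinGraph.{u}) : FinGraph.{u} :=
  ⟨Quotient (siblingSetoid (lam X.G)), rho (lam X.G)⟩

/-- The reduction of a finite graph: iterate `redStep` until it stabilizes (up to
isomorphism this happens after at most `Nat.card X.V` steps). -/
noncomputable def reduction (X : FinGraph.{u}) : FinGraph.{u} :=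
  redStep^[Nat.card X.V] X

/-- `G` contains an induced cycle on `n` vertices. -/
def HasInducedCycle {V : Type u} (G : SimpleGraph V) (n : ℕ) : Prop :=
  ∃ s : Set V, Nonempty (SimpleGraph.induce s G ≃g cycleGraph n)

/-- A graph is chordal if it has no induced cycle on four or more vertices. -/
def Chordal {V : Type u} (G : SimpleGraph V) : Prop :=
  ∀ m : ℕ, 4 ≤ m → ¬ HasInducedCycle G m

/-- The setoid identifying isomorphic graphs on `Fin n` satisfying a property `P`. -/
def graphSetoid (n : ℕ) (P : SimpleGraph (Fin n) → Prop) :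
    Setoid {G : SimpleGraph (Fin n) // P G} :=
  ⟨fun G H => Nonempty (G.1 ≃g H.1),
    ⟨fun _ => ⟨Iso.refl⟩, fun ⟨e⟩ => ⟨e.symm⟩, fun ⟨e⟩ ⟨f⟩ => ⟨e.trans f⟩⟩⟩

/-- The number of isomorphism classes of graphs on `n` vertices satisfying `P`. -/
noncomputable def numClasses (n : ℕ) (P : SimpleGraph (Fin n) → Prop) : ℕ :=
  Nat.card (Quotient (graphSetoid n P))


/-!
Removing the leaves of a connected graph other than `K2` yields a nonempty connected graph:
a walk between non-leaves that steps into a leaf must step straight back out again.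
Contracting sibling classes maps walks to walks, and closed neighbourhoods are unions of
sibling classes, so the quotient `ρ G` never has two distinct siblings; in particular it is
never `K2`. Hence `ρ ∘ λ` preserves "connected and not `K2`". On a connected graph without
leaves and siblings `ρ ∘ λ` is an isomorphism, and on any other connected graph it strictly
decreases the number of vertices, so after `|V|` steps it has reached a connected graph
without leaves and siblings.
-/

open Function

def IsConnectedReduced {V : Type*} (G : SimpleGraph V) : Prop :=
  G.Connected ∧ (∀ v, ¬ IsLeaf G v) ∧ ∀ u v, Sibling G u v → u = v

section

variable {V W : Type*} {G : SimpleGraph V} {H : SimpleGraph W}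

lemma mem_closedNbhd_iff {u v : V} : u ∈ closedNbhd G v ↔ u = v ∨ G.Adj v u := Iff.rfl

lemma mem_closedNbhd_comm {u v : V} : u ∈ closedNbhd G v ↔ v ∈ closedNbhd G u := by
  simp only [mem_closedNbhd_iff, eq_comm, G.adj_comm]

lemma Sibling.mem_closedNbhd_iff {x y : V} (h : Sibling G x y) (v : V) :
    x ∈ closedNbhd G v ↔ y ∈ closedNbhd G v := by
  rw [mem_closedNbhd_comm, h, mem_closedNbhd_comm]

lemma sibling_K2 : Sibling K2 0 1 := by
  ext x
  fin_cases x <;> simp [closedNbhd, K2]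

lemma IsLeaf.neighborSet_eq {v w : V} (hv : IsLeaf G v) (h : G.Adj v w) :
    G.neighborSet v = {w} := by
  obtain ⟨a, ha⟩ := Set.ncard_eq_one.mp (by rwa [← Nat.card_coe_set_eq])
  rw [ha, Set.mem_singleton_iff.mp (ha ▸ h : w ∈ ({a} : Set V))]

lemma IsLeaf.eq_of_adj {v w x : V} (hv : IsLeaf G v) (hw : G.Adj v w) (hx : G.Adj v x) :
    x = w := by
  have hx' : x ∈ G.neighborSet v := hx
  rwa [hv.neighborSet_eq hw] at hx'

namespace SimpleGraph.Iso

lemma image_closedNbhd (e : G ≃g H) (v : V) : e '' closedNbhd G v = closedNbhd H (e v) := by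
  rw [closedNbhd, Set.image_insert_eq, e.image_neighborSet, closedNbhd]

lemma sibling_iff (e : G ≃g H) {u v : V} : Sibling H (e u) (e v) ↔ Sibling G u v := by
  simp only [Sibling, ← image_closedNbhd, (Set.image_injective.mpr e.injective).eq_iff]

lemma isLeaf_iff (e : G ≃g H) {v : V} : IsLeaf H (e v) ↔ IsLeaf G v := by
  rw [IsLeaf, IsLeaf, Nat.card_congr (e.mapNeighborSet v)]

lemma isConnectedReduced (e : G ≃g H) (hG : IsConnectedReduced G) : IsConnectedReduced H := by
  obtain ⟨hc, hleaf, hsib⟩ := hG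
  refine ⟨e.connected_iff.mp hc, fun v hv => ?_, fun u v huv => ?_⟩
  · exact hleaf _ (e.symm.isLeaf_iff.mpr hv)
  · exact e.symm.injective (hsib _ _ (e.symm.sibling_iff.mpr huv))

end SimpleGraph.Iso

lemma SimpleGraph.Connected.eq_or_eq_of_isLeaf_of_isLeaf (hc : G.Connected) {v w : V}
    (h : G.Adj v w) (hv : IsLeaf G v) (hw : IsLeaf G w) (x : V) : x = v ∨ x = w := by
  suffices ∀ {a b : V}, G.Walk a b → (a = v ∨ a = w) → b = v ∨ b = w from
    this (hc.preconnected v x).some (.inl rfl)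
  intro a b p
  induction p with
  | nil => exact id
  | cons hab _ ih =>
    rintro (rfl | rfl)
    · exact ih (.inr (hv.eq_of_adj h hab))
    · exact ih (.inl (hw.eq_of_adj h.symm hab))

lemma nonempty_iso_K2_of_adj {v w : V} (h : G.Adj v w) (hall : ∀ x, x = v ∨ x = w) :
    Nonempty (G ≃g K2) := by
  have hG : G = ⊤ := by
    ext a b
    rcases hall a with rfl | rfl <;> rcases hall b with rfl | rfl <;>
      simp [h, h.symm, h.ne, h.ne.symm]
  have hcard : Nat.card V = 2 :=
    Nat.card_eq_two_iff.mpr ⟨v, w, h.ne, Set.eq_univ_of_forall fun x => by simpa using hall x⟩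
  have := Nat.finite_of_card_ne_zero (hcard ▸ two_ne_zero)
  exact ⟨hG ▸ Iso.completeGraph (Finite.equivFinOfCardEq hcard)⟩

lemma SimpleGraph.Connected.exists_not_isLeaf (hc : G.Connected)
    (hK2 : ¬ Nonempty (G ≃g K2)) : ∃ v, ¬ IsLeaf G v := by
  by_contra! hleaf
  obtain ⟨v⟩ := hc.nonempty
  obtain ⟨⟨w, hw⟩, -⟩ := Nat.card_eq_one_iff_exists.mp (hleaf v)
  exact hK2 (nonempty_iso_K2_of_adj hw (hc.eq_or_eq_of_isLeaf_of_isLeaf hw (hleaf v) (hleaf w)))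

def lamIsoOfForallNotIsLeaf (h : ∀ v, ¬ IsLeaf G v) : lam G ≃g G where
  toEquiv := Equiv.subtypeUnivEquiv h
  map_rel_iff' := Iff.rfl

lemma sibling_lam_iff (h : ∀ v, ¬ IsLeaf G v) {a b : {v | ¬ IsLeaf G v}} :
    Sibling (lam G) a b ↔ Sibling G a b :=
  (Iso.sibling_iff (lamIsoOfForallNotIsLeaf h)).symm

/-- The invariant `u = x ∨ G.Adj u x` lets a walk that steps into a leaf `x` be continued from
`x`'s only neighbour `u`, to which it must return next. -/
lemma SimpleGraph.Walk.lam_reachable {x v : V} (p : G.Walk x v) (hv : ¬ IsLeaf G v) {u : V}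
    (hu : ¬ IsLeaf G u) (hux : u = x ∨ G.Adj u x) :
    (lam G).Reachable ⟨u, hu⟩ ⟨v, hv⟩ := by
  induction p generalizing u with
  | nil =>
    rcases hux with rfl | h
    · rfl
    · exact Adj.reachable (G := lam G) h
  | @cons x y _ hxy _ ih =>
    rcases hux with rfl | hux
    · exact ih hv hu (.inr hxy)
    · by_cases hx : IsLeaf G x
      · exact ih hv hu (.inl (hx.eq_of_adj hux.symm hxy).symm)
      · exact (Adj.reachable (G := lam G) (u := ⟨u, hu⟩) (v := ⟨x, hx⟩) hux).trans
          (ih hv hx (.inr hxy))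

lemma SimpleGraph.Connected.lam (hc : G.Connected) (hK2 : ¬ Nonempty (G ≃g K2)) :
    (lam G).Connected := by
  obtain ⟨v, hv⟩ := hc.exists_not_isLeaf hK2
  have : Nonempty {v | ¬ IsLeaf G v} := ⟨⟨v, hv⟩⟩
  exact ⟨fun ⟨a, ha⟩ ⟨b, hb⟩ =>
    (hc.preconnected a b).some.lam_reachable hb ha (.inl rfl)⟩

lemma rho_adj_mk_iff {u v : V} :
    (rho G).Adj (Quotient.mk _ u) (Quotient.mk _ v) ↔ ¬ Sibling G u v ∧ G.Adj u v := by
  constructor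
  · rintro ⟨hne, u', v', hu, hv, h⟩
    have hsu : Sibling G u' u := Quotient.exact hu
    have hsv : Sibling G v' v := Quotient.exact hv
    refine ⟨fun hs => hne (Quotient.sound hs), ?_⟩
    have : u ∈ closedNbhd G v := by
      rw [← hsv, ← mem_closedNbhd_comm, ← hsu]
      exact Or.inr h
    rcases this with rfl | h
    · exact absurd rfl hne
    · exact h.symm
  · rintro ⟨hs, h⟩
    exact ⟨fun he => hs (Quotient.exact he), u, v, rfl, rfl, h⟩

lemma SimpleGraph.Reachable.rho_mk {u v : V} (h : G.Reachable u v) :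
    (rho G).Reachable (Quotient.mk _ u) (Quotient.mk _ v) := by
  rw [reachable_iff_reflTransGen] at h ⊢
  refine Relation.ReflTransGen.lift' _ (fun a b hab => ?_) _ _ h
  by_cases hs : Sibling G a b
  · rw [onFun, Quotient.sound hs]
  · exact .single (rho_adj_mk_iff.mpr ⟨hs, hab⟩)

lemma SimpleGraph.Connected.rho (hc : G.Connected) : (rho G).Connected := by
  have := hc.nonempty.map (Quotient.mk (siblingSetoid G))
  refine ⟨fun A B => ?_⟩
  induction A using Quotient.inductionOn
  induction B using Quotient.inductionOn
  exact (hc.preconnected _ _).rho_mk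

lemma closedNbhd_rho_mk (a : V) :
    closedNbhd (rho G) (Quotient.mk _ a) = Quotient.mk _ '' closedNbhd G a := by
  ext X
  induction X using Quotient.inductionOn with | h x => ?_
  rw [mem_closedNbhd_iff, rho_adj_mk_iff, Quotient.eq]
  simp only [Set.mem_image, Quotient.eq]
  constructor
  · rintro (hxa | ⟨-, hax⟩)
    · exact ⟨a, .inl rfl, Eq.symm hxa⟩
    · exact ⟨x, .inr hax, rfl⟩
  · rintro ⟨y, hy, hyx⟩
    by_cases hxa : Sibling G x a
    · exact .inl hxa
    · rcases (Sibling.mem_closedNbhd_iff hyx a).mp hy with rfl | hax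
      · exact .inl rfl
      · exact .inr ⟨fun h => hxa h.symm, hax⟩

lemma preimage_image_mk_closedNbhd (a : V) :
    Quotient.mk (siblingSetoid G) ⁻¹' (Quotient.mk _ '' closedNbhd G a) = closedNbhd G a := by
  ext x
  simp only [Set.mem_preimage, Set.mem_image, Quotient.eq]
  exact ⟨fun ⟨y, hy, hyx⟩ => (Sibling.mem_closedNbhd_iff hyx a).mp hy,
    fun hx => ⟨x, hx, rfl⟩⟩

lemma eq_of_sibling_rho {A B : Quotient (siblingSetoid G)} (h : Sibling (rho G) A B) :
    A = B := by
  induction A using Quotient.inductionOn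
  induction B using Quotient.inductionOn
  refine Quotient.sound (show Sibling G _ _ from ?_)
  have h' := congrArg (Quotient.mk (siblingSetoid G) ⁻¹' ·) h
  simpa only [Sibling, closedNbhd_rho_mk, preimage_image_mk_closedNbhd] using h'

lemma rho_not_iso_K2 : ¬ Nonempty (rho G ≃g K2) := fun ⟨e⟩ =>
  zero_ne_one (e.symm.injective (eq_of_sibling_rho (e.symm.sibling_iff.mpr sibling_K2)))

noncomputable def rhoIsoOfSiblingFree (h : ∀ u v, Sibling G u v → u = v) : G ≃g rho G where
  toEquiv := Equiv.ofBijective (Quotient.mk _)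
    ⟨fun u v huv => h u v (Quotient.exact huv), Quotient.mk_surjective⟩
  map_rel_iff' {u v} := by
    change (rho G).Adj (Quotient.mk _ u) (Quotient.mk _ v) ↔ G.Adj u v
    rw [rho_adj_mk_iff]
    exact ⟨And.right, fun huv => ⟨fun hs => huv.ne (h u v hs), huv⟩⟩

end

lemma Finite.card_quotient_lt {V : Type*} [Finite V] (s : Setoid V) {u v : V} (h : s u v)
    (hne : u ≠ v) : Nat.card (Quotient s) < Nat.card V := by
  classical
  have := Fintype.ofFinite V
  rw [Nat.card_eq_fintype_card, Nat.card_eq_fintype_card]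
  exact Fintype.card_lt_of_surjective_not_injective _ Quotient.mk_surjective
    fun hinj => hne (hinj (Quotient.sound h))

lemma isConnectedReduced_redStep {X : FinGraph.{u}} (hX : IsConnectedReduced X.G) :
    IsConnectedReduced (redStep X).G := by
  have hsib : ∀ a b, Sibling (lam X.G) a b → a = b := fun a b hab =>
    Subtype.ext (hX.2.2 _ _ ((sibling_lam_iff hX.2.1).mp hab))
  exact Iso.isConnectedReduced
    ((lamIsoOfForallNotIsLeaf hX.2.1).symm.trans (rhoIsoOfSiblingFree hsib)) hX

lemma isConnectedReduced_iterate_redStep {X : FinGraph.{u}} (hX : IsConnectedReduced X.G)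
    (n : ℕ) : IsConnectedReduced (redStep^[n] X).G := by
  induction n with
  | zero => exact hX
  | succ n ih => rw [iterate_succ_apply']; exact isConnectedReduced_redStep ih

lemma card_redStep_lt {X : FinGraph.{u}} (hc : X.G.Connected)
    (hX : ¬ IsConnectedReduced X.G) : Nat.card (redStep X).V < Nat.card X.V := by
  have hquot : Nat.card (redStep X).V ≤ Nat.card {v | ¬ IsLeaf X.G v} :=
    Nat.card_le_card_of_surjective _ Quotient.mk_surjective
  by_cases hleaf : ∃ v, IsLeaf X.G v
  · obtain ⟨v, hv⟩ := hleaf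
    exact hquot.trans_lt (Finite.card_subtype_lt (not_not.mpr hv))
  push Not at hleaf
  obtain ⟨u, v, huv, hne⟩ : ∃ u v, Sibling X.G u v ∧ u ≠ v := by
    by_contra! h
    exact hX ⟨hc, hleaf, h⟩
  have hsib : Sibling (lam X.G) ⟨u, hleaf u⟩ ⟨v, hleaf v⟩ := (sibling_lam_iff hleaf).mpr huv
  calc Nat.card (redStep X).V < Nat.card {v | ¬ IsLeaf X.G v} :=
        Finite.card_quotient_lt _ hsib fun h => hne (congrArg Subtype.val h)
    _ = Nat.card X.V := Nat.card_congr (Equiv.subtypeUnivEquiv hleaf)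

lemma isConnectedReduced_iterate_redStep_of_card_le {k : ℕ} {X : FinGraph.{u}}
    (hc : X.G.Connected) (hK2 : ¬ Nonempty (X.G ≃g K2)) (hk : Nat.card X.V ≤ k) :
    IsConnectedReduced (redStep^[k] X).G := by
  induction k generalizing X with
  | zero => have := hc.nonempty; exact absurd hk (Nat.card_pos).not_ge
  | succ k ih =>
    by_cases hX : IsConnectedReduced X.G
    · exact isConnectedReduced_iterate_redStep hX _
    rw [iterate_succ_apply]
    exact ih (hc.lam hK2).rho rho_not_iso_K2 (by have := card_redStep_lt hc hX; omega)

/-- For a connected graph `G` other than `K2`, some iterate of `ρ ∘ λ` is a connected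
graph without leaves and without distinct siblings; in particular the reduction of `G`
is such a graph. -/
theorem reduction_reduced {V : Type} [Fintype V] (G : SimpleGraph V)
    (hc : G.Connected) (hK2 : ¬ Nonempty (G ≃g K2)) :
    (∃ n : ℕ,
      (redStep^[n] ⟨V, G⟩).G.Connected ∧
      (∀ v, ¬ IsLeaf (redStep^[n] ⟨V, G⟩).G v) ∧
      (∀ u v, Sibling (redStep^[n] ⟨V, G⟩).G u v → u = v)) ∧
    (reduction ⟨V, G⟩).G.Connected ∧
    (∀ v, ¬ IsLeaf (reduction ⟨V, G⟩).G v) ∧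
    (∀ u v, Sibling (reduction ⟨V, G⟩).G u v → u = v) := by
  have h := isConnectedReduced_iterate_redStep_of_card_le (X := ⟨V, G⟩) hc hK2 le_rfl
  exact ⟨⟨_, h⟩, h⟩
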